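/- arXiv:2507.02739 — 5 statements merged into one kernel-verified Lean document; each statement's English description precedes it below -/
import Mathlib

section
/- For all sufficiently large x, the function Ψ_x changes sign exactly once on (0,∞): it is strictly positive on (0, ρ_x) and strictly negative on (ρ_x, ∞) outside of the single point ρ_x; moreover there is an absolute constant C such that |Ψ_x(ρ_x)| ≤ C e^{−ρ_x} for all x ≥ 3 (with the convention Ψ_x(ρ_x) taken as the value of Ψ_x at ρ_x). -/
open Real Filter Finset

/-- `Ψ_x(v) = (log log x)/v² − ∑_{q < e^v, q prime} 1/(q−1+v)`. -/
noncomputable def Psi (x v : ℝ) : ℝ :=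
  Real.log (Real.log x) / v ^ 2 -
    ∑ q ∈ (Finset.range ⌈Real.exp v⌉₊).filter Nat.Prime, 1 / ((q : ℝ) - 1 + v)

/-- `ρ_x = inf {v > 0 : Ψ_x(v) ≤ 0}`. -/
noncomputable def rho (x : ℝ) : ℝ := sInf {v : ℝ | 0 < v ∧ Psi x v ≤ 0}

/-!
Write `Ψ(v) = (ξ - v² S(v)) / v²` with `S(v) = ∑_{q < e^v prime} 1/(q - 1 + v)`. Each term
`v²/(q - 1 + v)` is strictly increasing in `v` and the set of primes grows with `v`, so `v² S(v)`
is strictly increasing as soon as the prime `2` is counted. For `ξ > 0` every `v` with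
`Ψ(v) ≤ 0` has `v > log 2`, so `Ψ` is positive below `ρ` and negative above it.

At `ρ` itself, the set of primes `q < e^v` is constant for `v` slightly below `ρ`, so `Ψ` is
left-continuous there and `Ψ(ρ) ≥ 0`. Slightly above `ρ` at most one new prime appears,
namely the unique integer in `[e^ρ, e^ρ + 1)`, so `S` jumps by at most `1/(e^ρ - 1 + ρ)`; since
`Ψ < 0` to the right, `Ψ(ρ) ≤ 1/(e^ρ - 1 + ρ) ≤ 2 e^{-ρ}`, using `e^ρ ≥ 2`.
-/

open Topology

noncomputable def primesBelowExp (v : ℝ) : Finset ℕ := (range ⌈exp v⌉₊).filter Nat.Prime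

noncomputable def primeRecipSum (v : ℝ) : ℝ :=
  ∑ q ∈ primesBelowExp v, 1 / ((q : ℝ) - 1 + v)

-- `Psi x = psiOf (log (log x))` and `rho x = rhoOf (log (log x))` hold definitionally.
noncomputable def psiOf (ξ v : ℝ) : ℝ := ξ / v ^ 2 - primeRecipSum v

noncomputable def rhoOf (ξ : ℝ) : ℝ := sInf {v : ℝ | 0 < v ∧ psiOf ξ v ≤ 0}

theorem mem_primesBelowExp {q : ℕ} {v : ℝ} :
    q ∈ primesBelowExp v ↔ q.Prime ∧ (q : ℝ) < exp v := by
  simp [primesBelowExp, Nat.lt_ceil, and_comm]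

theorem primesBelowExp_mono : Monotone primesBelowExp := fun _ _ h _ hq => by
  rw [mem_primesBelowExp] at hq ⊢
  exact ⟨hq.1, hq.2.trans_le (exp_le_exp.2 h)⟩

theorem two_le_of_mem_primesBelowExp {q : ℕ} {v : ℝ} (hq : q ∈ primesBelowExp v) :
    (2 : ℝ) ≤ q := by
  exact_mod_cast (mem_primesBelowExp.1 hq).1.two_le

theorem two_mem_primesBelowExp {v : ℝ} (hv : log 2 < v) : 2 ∈ primesBelowExp v :=
  mem_primesBelowExp.2 ⟨Nat.prime_two, by exact_mod_cast (log_lt_iff_lt_exp two_pos).1 hv⟩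

theorem primesBelowExp_eq_empty {v : ℝ} (hv : v ≤ log 2) : primesBelowExp v = ∅ :=
  eq_empty_of_forall_notMem fun q hq => by
    linarith [two_le_of_mem_primesBelowExp hq, (mem_primesBelowExp.1 hq).2,
      (le_log_iff_exp_le two_pos).1 hv]

theorem sq_div_add_lt_sq_div_add {c s t : ℝ} (hc : 0 < c) (hs : 0 < s) (hst : s < t) :
    s ^ 2 / (c + s) < t ^ 2 / (c + t) := by
  rw [div_lt_div_iff₀ (by positivity) (by linarith)]
  nlinarith [mul_pos hc (mul_pos (sub_pos.2 hst) (add_pos hs (hs.trans hst))),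
    mul_pos (mul_pos hs (hs.trans hst)) (sub_pos.2 hst)]

theorem sq_mul_primeRecipSum_lt {w v : ℝ} (hw : log 2 < w) (hwv : w < v) :
    w ^ 2 * primeRecipSum w < v ^ 2 * primeRecipSum v := by
  have hw0 : 0 < w := (log_pos one_lt_two).trans hw
  simp only [primeRecipSum, mul_sum, mul_one_div]
  calc ∑ q ∈ primesBelowExp w, w ^ 2 / ((q : ℝ) - 1 + w)
      < ∑ q ∈ primesBelowExp w, v ^ 2 / ((q : ℝ) - 1 + v) :=
        sum_lt_sum_of_nonempty ⟨2, two_mem_primesBelowExp hw⟩ fun q hq =>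
          sq_div_add_lt_sq_div_add (by linarith [two_le_of_mem_primesBelowExp hq]) hw0 hwv
    _ ≤ ∑ q ∈ primesBelowExp v, v ^ 2 / ((q : ℝ) - 1 + v) :=
        sum_le_sum_of_subset_of_nonneg (primesBelowExp_mono hwv.le) fun q hq _ =>
          div_nonneg (sq_nonneg v) (by linarith [two_le_of_mem_primesBelowExp hq])

theorem primesBelowExp_eventually_eq_left (v : ℝ) :
    ∀ᶠ w in 𝓝[≤] v, primesBelowExp w = primesBelowExp v := by
  have hnear : ∀ᶠ w in 𝓝 v, ∀ q ∈ primesBelowExp v, (q : ℝ) < exp w :=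
    (eventually_all_finset _).2 fun q hq =>
      (continuous_exp.tendsto v).eventually_const_lt (mem_primesBelowExp.1 hq).2
  filter_upwards [nhdsWithin_le_nhds hnear, self_mem_nhdsWithin] with w hw hwv
  exact (primesBelowExp_mono hwv).antisymm fun q hq =>
    mem_primesBelowExp.2 ⟨(mem_primesBelowExp.1 hq).1, hw q hq⟩

theorem continuousWithinAt_psiOf_Iic (ξ : ℝ) {v : ℝ} (hv : 0 < v) :
    ContinuousWithinAt (psiOf ξ) (Set.Iic v) v := by
  have hcont :
      ContinuousAt (fun w => ξ / w ^ 2 - ∑ q ∈ primesBelowExp v, 1 / ((q : ℝ) - 1 + w)) v :=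
    (continuousAt_const.div (continuousAt_id.pow 2) (pow_ne_zero 2 hv.ne')).sub
      (tendsto_finsetSum _ fun q hq => continuousAt_const.div
        (continuousAt_const.add continuousAt_id)
        (by linarith [two_le_of_mem_primesBelowExp hq]))
  refine hcont.continuousWithinAt.congr_of_eventuallyEq ?_ rfl
  filter_upwards [primesBelowExp_eventually_eq_left v] with w hw
  rw [psiOf, primeRecipSum, hw]

theorem card_le_one_of_forall_mem_Ico {s : Finset ℕ} {a : ℝ}
    (h : ∀ q ∈ s, (q : ℝ) ∈ Set.Ico a (a + 1)) : #s ≤ 1 := by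
  refine card_le_one.2 fun p hp q hq => ?_
  obtain ⟨hp₁, hp₂⟩ := h p hp
  obtain ⟨hq₁, hq₂⟩ := h q hq
  have hpq : p < q + 1 := by exact_mod_cast (by linarith : (p : ℝ) < q + 1)
  have hqp : q < p + 1 := by exact_mod_cast (by linarith : (q : ℝ) < p + 1)
  omega

theorem primeRecipSum_le_add_one_div {v w : ℝ} (hv : 0 < v) (hvw : v < w)
    (hw : exp w ≤ exp v + 1) :
    primeRecipSum w ≤ primeRecipSum v + 1 / (exp v - 1 + v) := by
  have hb : 0 < exp v - 1 + v := by linarith [add_one_le_exp v]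
  have hsub := primesBelowExp_mono hvw.le
  have hnew : ∀ q ∈ primesBelowExp w \ primesBelowExp v,
      (q : ℝ) ∈ Set.Ico (exp v) (exp v + 1) := by
    intro q hq
    obtain ⟨hqw, hqv⟩ := mem_sdiff.1 hq
    rw [mem_primesBelowExp] at hqw hqv
    exact ⟨not_lt.1 fun h => hqv ⟨hqw.1, h⟩, hqw.2.trans_le hw⟩
  have hsum_new : ∑ q ∈ primesBelowExp w \ primesBelowExp v, 1 / ((q : ℝ) - 1 + w)
      ≤ 1 / (exp v - 1 + v) := by
    refine (sum_le_card_nsmul _ _ _ fun q hq =>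
      one_div_le_one_div_of_le hb (by linarith [(hnew q hq).1])).trans ?_
    rw [nsmul_eq_mul]
    exact mul_le_of_le_one_left (one_div_pos.2 hb).le
      (by exact_mod_cast card_le_one_of_forall_mem_Ico hnew)
  have hsum_old : ∑ q ∈ primesBelowExp v, 1 / ((q : ℝ) - 1 + w) ≤ primeRecipSum v :=
    sum_le_sum fun q hq => one_div_le_one_div_of_le
      (by linarith [two_le_of_mem_primesBelowExp hq]) (by linarith)
  rw [primeRecipSum, ← sum_sdiff hsub]
  linarith

section

variable {ξ : ℝ}

theorem log_two_lt_of_psiOf_nonpos (hξ : 0 < ξ) {v : ℝ} (hv : 0 < v) (hψ : psiOf ξ v ≤ 0) :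
    log 2 < v := by
  by_contra! h
  rw [psiOf, primeRecipSum, primesBelowExp_eq_empty h, sum_empty, sub_zero] at hψ
  exact hψ.not_gt (by positivity)

theorem exists_psiOf_nonpos (hξ : 0 < ξ) : ∃ v, 0 < v ∧ psiOf ξ v ≤ 0 := by
  set v := max 1 (2 * ξ)
  have hv₁ : 1 ≤ v := le_max_left _ _
  have hvξ : 2 * ξ ≤ v := le_max_right _ _
  have h2 : 2 ∈ primesBelowExp v := two_mem_primesBelowExp (by linarith [log_two_lt_d9])
  have hsum : 1 / (1 + v) ≤ primeRecipSum v :=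
    calc 1 / (1 + v) = 1 / (((2 : ℕ) : ℝ) - 1 + v) := by norm_num
      _ ≤ primeRecipSum v := single_le_sum (f := fun q : ℕ => 1 / ((q : ℝ) - 1 + v))
          (fun q hq => (one_div_pos.2 (by linarith [two_le_of_mem_primesBelowExp hq])).le) h2
  refine ⟨v, by linarith, sub_nonpos.2 (le_trans ?_ hsum)⟩
  rw [div_le_div_iff₀ (by positivity) (by positivity)]
  nlinarith

theorem bddBelow_psiOf_nonpos : BddBelow {v : ℝ | 0 < v ∧ psiOf ξ v ≤ 0} :=
  ⟨0, fun _ hv => hv.1.le⟩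

theorem log_two_le_rhoOf (hξ : 0 < ξ) : log 2 ≤ rhoOf ξ :=
  le_csInf (exists_psiOf_nonpos hξ) fun _ hv => (log_two_lt_of_psiOf_nonpos hξ hv.1 hv.2).le

theorem rhoOf_pos (hξ : 0 < ξ) : 0 < rhoOf ξ :=
  (log_pos one_lt_two).trans_le (log_two_le_rhoOf hξ)

theorem psiOf_pos_of_lt_rhoOf {v : ℝ} (hv : 0 < v) (hvρ : v < rhoOf ξ) : 0 < psiOf ξ v := by
  by_contra! h
  exact hvρ.not_ge (csInf_le bddBelow_psiOf_nonpos ⟨hv, h⟩)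

theorem psiOf_neg_of_rhoOf_lt (hξ : 0 < ξ) {v : ℝ} (hv : rhoOf ξ < v) : psiOf ξ v < 0 := by
  obtain ⟨w, ⟨hw₀, hw⟩, hwv⟩ := exists_lt_of_csInf_lt (exists_psiOf_nonpos hξ) hv
  have hξw : ξ ≤ w ^ 2 * primeRecipSum w := by
    rw [psiOf, sub_nonpos, div_le_iff₀ (by positivity)] at hw
    linarith
  have hmono := sq_mul_primeRecipSum_lt (log_two_lt_of_psiOf_nonpos hξ hw₀ hw) hwv
  rw [psiOf, sub_neg, div_lt_iff₀ (pow_pos (hw₀.trans hwv) 2)]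
  linarith

theorem psiOf_rhoOf_nonneg (hξ : 0 < ξ) : 0 ≤ psiOf ξ (rhoOf ξ) := by
  have hρ := rhoOf_pos hξ
  refine ge_of_tendsto ((continuousWithinAt_psiOf_Iic ξ hρ).mono Set.Iio_subset_Iic_self) ?_
  filter_upwards [Ioo_mem_nhdsLT hρ] with v hv
  exact (psiOf_pos_of_lt_rhoOf hv.1 hv.2).le

theorem psiOf_rhoOf_le (hξ : 0 < ξ) :
    psiOf ξ (rhoOf ξ) ≤ 1 / (exp (rhoOf ξ) - 1 + rhoOf ξ) := by
  set ρ := rhoOf ξ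
  have hρ : 0 < ρ := rhoOf_pos hξ
  have hlim : Tendsto (fun w => ξ / ρ ^ 2 - ξ / w ^ 2 + 1 / (exp ρ - 1 + ρ)) (𝓝[>] ρ)
      (𝓝 (1 / (exp ρ - 1 + ρ))) := by
    have hcont : ContinuousAt (fun w => ξ / ρ ^ 2 - ξ / w ^ 2 + 1 / (exp ρ - 1 + ρ)) ρ := by
      fun_prop (disch := positivity)
    simpa using hcont.tendsto.mono_left nhdsWithin_le_nhds
  have hexp : ∀ᶠ w in 𝓝 ρ, exp w < exp ρ + 1 :=
    (continuous_exp.tendsto ρ).eventually_lt_const (lt_add_one _)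
  refine ge_of_tendsto hlim ?_
  filter_upwards [nhdsWithin_le_nhds hexp, self_mem_nhdsWithin] with w hw hρw
  have hjump := primeRecipSum_le_add_one_div hρ hρw hw.le
  have hneg := psiOf_neg_of_rhoOf_lt hξ hρw
  rw [psiOf] at hneg ⊢
  linarith

theorem abs_psiOf_rhoOf_le (hξ : 0 < ξ) : |psiOf ξ (rhoOf ξ)| ≤ 2 * exp (-rhoOf ξ) := by
  have hρ := rhoOf_pos hξ
  have h2 : 2 ≤ exp (rhoOf ξ) := (log_le_iff_le_exp two_pos).1 (log_two_le_rhoOf hξ)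
  rw [abs_of_nonneg (psiOf_rhoOf_nonneg hξ), exp_neg, ← div_eq_mul_inv]
  refine (psiOf_rhoOf_le hξ).trans ?_
  rw [div_le_div_iff₀ (by linarith) (by linarith)]
  linarith

end

theorem log_log_pos_of_three_le {x : ℝ} (hx : 3 ≤ x) : 0 < log (log x) :=
  log_pos ((lt_log_iff_exp_lt (by linarith)).2 (by linarith [exp_one_lt_d9]))

theorem psi_sign_change :
    (∃ x₁ : ℝ, ∀ x ≥ x₁,
      (∀ v : ℝ, 0 < v → v < rho x → 0 < Psi x v) ∧
      (∀ v : ℝ, rho x < v → Psi x v < 0)) ∧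
    ∃ C : ℝ, ∀ x ≥ (3 : ℝ), |Psi x (rho x)| ≤ C * Real.exp (-(rho x)) :=
  ⟨⟨3, fun _ hx => ⟨fun _ hv hvρ => psiOf_pos_of_lt_rhoOf hv hvρ,
      fun _ hv => psiOf_neg_of_rhoOf_lt (log_log_pos_of_three_le hx) hv⟩⟩,
    2, fun _ hx => abs_psiOf_rhoOf_le (log_log_pos_of_three_le hx)⟩
end

section
/- Fix an integer J ≥ 1. There exist constants C_J and v₀ such that for every integer m ≥ 2 and every real v ≥ v₀: | ∫_v^∞ dt/(t^m log t) − (1/v^{m−1}) Σ_{1 ≤ j ≤ J} (−1)^{j+1} (j−1)! / ((m−1) log v)^j | ≤ C_J / ( v^{m−1} (m log v)^{J+1} ). -/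
/-!
With `m = n + 1` and `I_j(v) = ∫_v^∞ dt / (t^(n+1) (log t)^j)`, differentiating
`t ↦ 1 / (t^n (log t)^j)` and integrating over `(v, ∞)` gives
`n I_j + j I_(j+1) = 1 / (v^n (log v)^j)`. Iterating this `J` times from `j = 1` produces the
`J`-term expansion with remainder `(-1)^J J! / n^J · I_(J+1)`, and since `log t ≥ log v` on
the range of integration, `0 ≤ I_(J+1) ≤ I_0 / (log v)^(J+1) = 1 / (n v^n (log v)^(J+1))`.
Finally `m ≤ 2n` trades `n` for `m` in the error term at the cost of a factor `2^(J+1)`.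
-/

open Real Filter Finset MeasureTheory

noncomputable def powLogInv (m j : ℕ) (t : ℝ) : ℝ := (t ^ m * log t ^ j)⁻¹

@[simp]
lemma powLogInv_zero_right (m : ℕ) (t : ℝ) : powLogInv m 0 t = (t ^ m)⁻¹ := by
  simp [powLogInv]

lemma powLogInv_nonneg (m j : ℕ) {t : ℝ} (ht : 1 ≤ t) : 0 ≤ powLogInv m j t := by
  have := log_nonneg ht
  unfold powLogInv
  positivity

lemma powLogInv_le {m j : ℕ} {v t : ℝ} (hv : 1 < v) (ht : v ≤ t) :
    powLogInv m j t ≤ (log v ^ j)⁻¹ * (t ^ m)⁻¹ := by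
  have hlogv := log_pos hv
  have ht0 : 0 < t := by linarith
  rw [← mul_inv, mul_comm]
  refine inv_anti₀ (by positivity) (mul_le_mul_of_nonneg_left ?_ (by positivity))
  exact pow_le_pow_left₀ hlogv.le (log_le_log (by linarith) ht) j

lemma integrableOn_Ioi_inv_pow {m : ℕ} (hm : 2 ≤ m) {v : ℝ} (hv : 0 < v) :
    IntegrableOn (fun t : ℝ => (t ^ m)⁻¹) (Set.Ioi v) := by
  have hm' : -(m : ℝ) < -1 := by
    have : (2 : ℝ) ≤ m := by exact_mod_cast hm
    linarith
  refine (integrableOn_Ioi_rpow_of_lt hm' hv).congr_fun (fun t ht => ?_) measurableSet_Ioi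
  dsimp only
  rw [rpow_neg (hv.trans ht).le, rpow_natCast]

lemma integrableOn_powLogInv {m : ℕ} (hm : 2 ≤ m) (j : ℕ) {v : ℝ} (hv : 1 < v) :
    IntegrableOn (powLogInv m j) (Set.Ioi v) := by
  refine ((integrableOn_Ioi_inv_pow hm (by linarith)).const_mul (log v ^ j)⁻¹).mono' ?_ ?_
  · unfold powLogInv
    fun_prop
  · filter_upwards [ae_restrict_mem measurableSet_Ioi] with t ht
    rw [Real.norm_of_nonneg (powLogInv_nonneg m j (hv.trans ht).le)]
    exact powLogInv_le hv ht.le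

lemma hasDerivAt_powLogInv (n j : ℕ) {x : ℝ} (hx : 1 < x) :
    HasDerivAt (powLogInv n j)
      (-(n * powLogInv (n + 1) j x + j * powLogInv (n + 1) (j + 1) x)) x := by
  have hx0 : 0 < x := by linarith
  have hlog : 0 < log x := log_pos hx
  have hne : x ^ n * log x ^ j ≠ 0 := by positivity
  have hprod : HasDerivAt (fun t => t ^ n * log t ^ j)
      (n * x ^ (n - 1) * log x ^ j + x ^ n * (j * log x ^ (j - 1) * x⁻¹)) x :=
    (hasDerivAt_pow n x).mul ((hasDerivAt_pow j (log x)).comp x (hasDerivAt_log hx0.ne'))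
  refine (hprod.inv hne).congr_deriv ?_
  unfold powLogInv
  -- the case split turns the truncated exponents `n - 1`, `j - 1` into genuine predecessors
  rcases n with _ | n <;> rcases j with _ | j
  all_goals
    push_cast
    field_simp
    ring

lemma tendsto_powLogInv_atTop {n : ℕ} (hn : n ≠ 0) (j : ℕ) :
    Tendsto (powLogInv n j) atTop (nhds 0) := by
  refine Tendsto.inv_tendsto_atTop (tendsto_atTop_mono' atTop ?_ (tendsto_pow_atTop hn))
  filter_upwards [eventually_ge_atTop (exp 1)] with x hx
  have hlog : 1 ≤ log x := by simpa using log_le_log (exp_pos 1) hx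
  exact le_mul_of_one_le_right (pow_nonneg ((exp_pos 1).le.trans hx) n) (one_le_pow₀ hlog)

lemma integral_Ioi_powLogInv_succ {n : ℕ} (hn : n ≠ 0) (j : ℕ) {v : ℝ} (hv : 1 < v) :
    ∫ t in Set.Ioi v, powLogInv (n + 1) j t
      = powLogInv n j v / n - j / n * ∫ t in Set.Ioi v, powLogInv (n + 1) (j + 1) t := by
  have hm : 2 ≤ n + 1 := by omega
  have hA := (integrableOn_powLogInv hm j hv).const_mul (n : ℝ)
  have hB := (integrableOn_powLogInv hm (j + 1) hv).const_mul (j : ℝ)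
  have hftc := integral_Ioi_of_hasDerivAt_of_tendsto'
    (fun x hx => hasDerivAt_powLogInv n j (hv.trans_le hx)) (hA.add hB).neg
    (tendsto_powLogInv_atTop hn j)
  rw [integral_neg, integral_add hA hB, integral_const_mul, integral_const_mul] at hftc
  field_simp
  linarith

lemma integral_Ioi_powLogInv_le {m : ℕ} (hm : 2 ≤ m) (j : ℕ) {v : ℝ} (hv : 1 < v) :
    ∫ t in Set.Ioi v, powLogInv m j t ≤ (log v ^ j)⁻¹ * ∫ t in Set.Ioi v, (t ^ m)⁻¹ := by
  rw [← integral_const_mul]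
  exact setIntegral_mono_on (integrableOn_powLogInv hm j hv)
    ((integrableOn_Ioi_inv_pow hm (by linarith)).const_mul _) measurableSet_Ioi
    (fun t ht => powLogInv_le hv (le_of_lt ht))

lemma integral_Ioi_inv_pow_succ {n : ℕ} (hn : n ≠ 0) {v : ℝ} (hv : 1 < v) :
    ∫ t in Set.Ioi v, (t ^ (n + 1))⁻¹ = 1 / (n * v ^ n) := by
  simpa [mul_comm, div_eq_inv_mul] using integral_Ioi_powLogInv_succ hn 0 hv

lemma integral_Ioi_powLogInv_one_eq_sum_add {n : ℕ} (hn : n ≠ 0) {v : ℝ} (hv : 1 < v) (J : ℕ) :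
    ∫ t in Set.Ioi v, powLogInv (n + 1) 1 t
      = 1 / v ^ n * ∑ j ∈ Icc 1 J, (-1 : ℝ) ^ (j + 1) * (j - 1).factorial / (n * log v) ^ j
        + (-1) ^ J * J.factorial / (n : ℝ) ^ J * ∫ t in Set.Ioi v, powLogInv (n + 1) (J + 1) t := by
  have hlog : log v ≠ 0 := (log_pos hv).ne'
  induction J with
  | zero => simp
  | succ J ih =>
    rw [sum_Icc_succ_top (by omega), ih, integral_Ioi_powLogInv_succ hn (J + 1) hv]
    simp only [powLogInv, Nat.add_sub_cancel, Nat.factorial_succ]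
    push_cast
    field_simp
    ring

lemma abs_integral_Ioi_powLogInv_one_sub_sum_le {n : ℕ} (hn : n ≠ 0) {v : ℝ} (hv : 1 < v)
    (J : ℕ) :
    |(∫ t in Set.Ioi v, powLogInv (n + 1) 1 t)
        - 1 / v ^ n * ∑ j ∈ Icc 1 J, (-1 : ℝ) ^ (j + 1) * (j - 1).factorial / (n * log v) ^ j|
      ≤ J.factorial / (v ^ n * (n * log v) ^ (J + 1)) := by
  have hlog := log_pos hv
  have hrem_nonneg : 0 ≤ ∫ t in Set.Ioi v, powLogInv (n + 1) (J + 1) t :=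
    setIntegral_nonneg measurableSet_Ioi fun t ht => powLogInv_nonneg _ _ (hv.trans ht).le
  have hrem_le := integral_Ioi_powLogInv_le (by omega : 2 ≤ n + 1) (J + 1) hv
  rw [integral_Ioi_inv_pow_succ hn hv] at hrem_le
  rw [integral_Ioi_powLogInv_one_eq_sum_add hn hv J, add_sub_cancel_left, abs_mul, abs_div,
    abs_mul, abs_pow, abs_neg, abs_one, one_pow, one_mul, Nat.abs_cast, abs_pow, Nat.abs_cast,
    abs_of_nonneg hrem_nonneg]
  calc (J.factorial : ℝ) / n ^ J * ∫ t in Set.Ioi v, powLogInv (n + 1) (J + 1) t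
      ≤ J.factorial / n ^ J * ((log v ^ (J + 1))⁻¹ * (1 / (n * v ^ n))) := by gcongr
    _ = J.factorial / (v ^ n * (n * log v) ^ (J + 1)) := by
      field_simp
      ring

theorem integral_tail_asymptotic_expansion_general (J : ℕ) :
    ∃ C : ℝ, ∃ v₀ : ℝ, ∀ m : ℕ, 2 ≤ m → ∀ v ≥ v₀,
      |(∫ t in Set.Ioi v, 1 / (t ^ m * Real.log t)) -
          (1 / v ^ (m - 1)) *
            ∑ j ∈ Finset.Icc 1 J,
              (-1 : ℝ) ^ (j + 1) * (Nat.factorial (j - 1) : ℝ) /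
                ((((m : ℝ) - 1) * Real.log v) ^ j)| ≤
        C / (v ^ (m - 1) * ((m : ℝ) * Real.log v) ^ (J + 1)) := by
  refine ⟨J.factorial * 2 ^ (J + 1), 2, fun m hm v hv => ?_⟩
  obtain ⟨n, rfl⟩ : ∃ n, m = n + 1 := ⟨m - 1, by omega⟩
  have hn : n ≠ 0 := by omega
  have hv1 : 1 < v := by linarith
  have hlog := log_pos hv1
  have hintegrand (t : ℝ) : 1 / (t ^ (n + 1) * log t) = powLogInv (n + 1) 1 t := by
    simp [powLogInv]
  have hn1 : (1 : ℝ) ≤ n := by exact_mod_cast Nat.one_le_iff_ne_zero.mpr hn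
  have hm_le : (n : ℝ) + 1 ≤ 2 * n := by linarith
  simp only [hintegrand]
  rw [Nat.add_sub_cancel, Nat.cast_succ, add_sub_cancel_right]
  refine (abs_integral_Ioi_powLogInv_one_sub_sum_le hn hv1 J).trans ?_
  calc (J.factorial : ℝ) / (v ^ n * (n * log v) ^ (J + 1))
      = J.factorial * 2 ^ (J + 1) / (v ^ n * (2 * n * log v) ^ (J + 1)) := by
        field_simp
        ring
    _ ≤ J.factorial * 2 ^ (J + 1) / (v ^ n * ((n + 1) * log v) ^ (J + 1)) := by
        gcongr

theorem integral_tail_asymptotic_expansion (J : ℕ) (hJ : 1 ≤ J) :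
    ∃ C : ℝ, ∃ v₀ : ℝ, ∀ m : ℕ, 2 ≤ m → ∀ v ≥ v₀,
      |(∫ t in Set.Ioi v, 1 / (t ^ m * Real.log t)) -
          (1 / v ^ (m - 1)) *
            ∑ j ∈ Finset.Icc 1 J,
              (-1 : ℝ) ^ (j + 1) * (Nat.factorial (j - 1) : ℝ) /
                ((((m : ℝ) - 1) * Real.log v) ^ j)| ≤
        C / (v ^ (m - 1) * ((m : ℝ) * Real.log v) ^ (J + 1)) :=
  integral_tail_asymptotic_expansion_general J
end

section
/- Fix an integer J ≥ 1. There exist constants C_J and v₀ such that for every integer n ≥ 0 and every real v ≥ v₀: ∫_2^v t^n dt/log t = Σ_{1 ≤ j ≤ J} v^{n+1} (j−1)! / ((n+1) log v)^j − (2^{n+1}/(n+1)) · (1/log 2 + θ_1 C_J/(n+1)) + θ_2 C_J v^{n+1} / ((n+1) log v)^{J+1} for some reals θ_1, θ_2 with |θ_1| ≤ 1, |θ_2| ≤ 1. -/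
open Real Filter Finset MeasureTheory

/-!
Substituting `u = t ^ (n + 1)` turns the integral into
`∫ u in 2 ^ (n + 1)..v ^ (n + 1), 1 / log u`, and `J` integrations by parts give the classical
expansion of the logarithmic integral with remainder `J! * ∫ 1 / log u ^ (J + 1)`.
Since `log (2 ^ (n + 1)) = (n + 1) * log 2`, the lower-endpoint terms with `j ≥ 2` carry an
extra factor `1 / (n + 1)`. The remainder is bounded uniformly in `n` by splitting at `√x`:
the piece over `[2, √x]` is `O(√x)`, hence negligible against `x / log x ^ (J + 1)`, and on
`[√x, x]` one has `log u ≥ log x / 2`.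
-/

theorem integral_pow_div_log_eq_integral_one_div_log (n : ℕ) {a b : ℝ} (ha : 0 ≤ a)
    (hab : a ≤ b) :
    ∫ t in a..b, t ^ n / log t = ∫ u in a ^ (n + 1)..b ^ (n + 1), 1 / log u := by
  have hsubst := intervalIntegral.integral_comp_mul_deriv_of_deriv_nonneg
    (f := fun t : ℝ => t ^ (n + 1)) (f' := fun t => ((n : ℝ) + 1) * t ^ n)
    (g := fun u => 1 / log u) (by fun_prop)
    (fun t _ => by simpa using hasDerivAt_pow (n + 1) t)
    (fun t ht => by
      have : 0 ≤ t := by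
        rw [min_eq_left hab] at ht
        exact ha.trans ht.1.le
      positivity)
  rw [← hsubst]
  -- the pointwise identity also holds at `t = 1`, where both sides are `_ / 0 = 0`
  congr 1 with t
  simp only [Function.comp, log_pow, Nat.cast_add, Nat.cast_one]
  have : (n : ℝ) + 1 ≠ 0 := by positivity
  rw [one_div, mul_inv, mul_mul_mul_comm, inv_mul_cancel₀ this, one_mul, div_eq_inv_mul]

theorem continuousOn_one_div_log_pow (k : ℕ) :
    ContinuousOn (fun u => 1 / log u ^ k) (Set.Ioi 1) := by
  refine continuousOn_const.div ((continuousOn_log.mono fun u hu => ?_).pow k) fun u hu => ?_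
  · exact ne_of_gt (zero_lt_one.trans hu)
  · exact pow_ne_zero k (log_pos hu).ne'

theorem intervalIntegrable_one_div_log_pow (k : ℕ) {a b : ℝ} (ha : 1 < a) (hab : a ≤ b) :
    IntervalIntegrable (fun u => 1 / log u ^ k) volume a b :=
  ((continuousOn_one_div_log_pow k).mono fun _ hu => ha.trans_le hu.1).intervalIntegrable_of_Icc hab

theorem hasDerivAt_div_log_pow (k : ℕ) {u : ℝ} (hu : 1 < u) :
    HasDerivAt (fun u => u / log u ^ k) (1 / log u ^ k - k / log u ^ (k + 1)) u := by
  have hlog : log u ≠ 0 := (log_pos hu).ne'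
  refine ((hasDerivAt_id' u).fun_div ((hasDerivAt_log (by positivity)).fun_pow k)
    (pow_ne_zero k hlog)).congr_deriv ?_
  rcases k with _ | k
  · simp
  · simp only [Nat.add_sub_cancel, Nat.cast_add, Nat.cast_one]
    field_simp
    ring

theorem integral_one_div_log_pow_eq (k : ℕ) {a b : ℝ} (ha : 1 < a) (hab : a ≤ b) :
    ∫ u in a..b, 1 / log u ^ k =
      b / log b ^ k - a / log a ^ k + k * ∫ u in a..b, 1 / log u ^ (k + 1) := by
  have hk := intervalIntegrable_one_div_log_pow k ha hab
  have hk1 := (intervalIntegrable_one_div_log_pow (k + 1) ha hab).const_mul (k : ℝ)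
  have hftc := intervalIntegral.integral_eq_sub_of_hasDerivAt (f := fun u => u / log u ^ k)
    (fun u hu => by
      simpa only [mul_one_div] using
        hasDerivAt_div_log_pow k (ha.trans_le (Set.uIcc_of_le hab ▸ hu).1))
    (hk.sub hk1)
  rw [intervalIntegral.integral_sub hk hk1, intervalIntegral.integral_const_mul] at hftc
  linarith

theorem integral_one_div_log_eq_sum_add (K : ℕ) {a b : ℝ} (ha : 1 < a) (hab : a ≤ b) :
    ∫ u in a..b, 1 / log u =
      ∑ j ∈ Icc 1 K, ((j - 1).factorial : ℝ) * (b / log b ^ j - a / log a ^ j) +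
        K.factorial * ∫ u in a..b, 1 / log u ^ (K + 1) := by
  induction K with
  | zero => simp
  | succ K ih =>
    rw [ih, integral_one_div_log_pow_eq (K + 1) ha hab, sum_Icc_succ_top (by omega),
      Nat.add_sub_cancel, Nat.factorial_succ]
    push_cast
    ring

theorem integral_one_div_log_pow_le (k : ℕ) {a b : ℝ} (ha : 1 < a) (hab : a ≤ b) :
    ∫ u in a..b, 1 / log u ^ k ≤ (b - a) / log a ^ k := by
  have hloga := log_pos ha
  have := intervalIntegral.integral_mono_on hab (intervalIntegrable_one_div_log_pow k ha hab)
    intervalIntegrable_const fun u hu =>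
      one_div_le_one_div_of_le (by positivity)
        (pow_le_pow_left₀ hloga.le (log_le_log (by linarith) hu.1) k)
  simpa [div_eq_mul_one_div (b - a)] using this

theorem integral_one_div_log_pow_nonneg (k : ℕ) {a b : ℝ} (ha : 1 ≤ a) (hab : a ≤ b) :
    0 ≤ ∫ u in a..b, 1 / log u ^ k :=
  intervalIntegral.integral_nonneg hab fun u hu => by
    have := log_nonneg (ha.trans hu.1)
    positivity

theorem integral_one_div_log_pow_le_of_log_pow_le (k : ℕ) {x : ℝ} (hx : 4 ≤ x)
    (hlog : log x ^ k ≤ log 2 ^ k * √x) :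
    ∫ u in (2 : ℝ)..x, 1 / log u ^ k ≤ (1 + 2 ^ k) * x / log x ^ k := by
  have hs2 : 2 ≤ √x := by
    rw [show (2 : ℝ) = √4 by rw [show (4 : ℝ) = 2 ^ 2 by norm_num, sqrt_sq zero_le_two]]
    exact sqrt_le_sqrt hx
  have hsx : √x * √x = x := mul_self_sqrt (by linarith)
  have hlog2 : 0 < log 2 := log_pos one_lt_two
  have hlogx : 0 < log x := log_pos (by linarith)
  have hlow : ∫ u in (2 : ℝ)..√x, 1 / log u ^ k ≤ x / log x ^ k :=
    calc ∫ u in (2 : ℝ)..√x, 1 / log u ^ k ≤ (√x - 2) / log 2 ^ k :=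
          integral_one_div_log_pow_le k one_lt_two hs2
      _ ≤ √x / log 2 ^ k := by gcongr; linarith
      _ ≤ x / log x ^ k := by
          rw [div_le_div_iff₀ (by positivity) (by positivity)]
          calc √x * log x ^ k ≤ √x * (log 2 ^ k * √x) := by gcongr
            _ = x * log 2 ^ k := by linear_combination log 2 ^ k * hsx
  have hhigh : ∫ u in √x..x, 1 / log u ^ k ≤ 2 ^ k * x / log x ^ k :=
    calc ∫ u in √x..x, 1 / log u ^ k ≤ (x - √x) / log √x ^ k :=
          integral_one_div_log_pow_le k (by linarith) (by nlinarith)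
      _ = 2 ^ k * (x - √x) / log x ^ k := by
          rw [log_sqrt (by linarith), div_pow]
          field_simp
      _ ≤ 2 ^ k * x / log x ^ k := by gcongr; linarith
  rw [← intervalIntegral.integral_add_adjacent_intervals
    (intervalIntegrable_one_div_log_pow k one_lt_two hs2)
    (intervalIntegrable_one_div_log_pow k (by linarith) (by nlinarith))]
  linarith [show (1 + 2 ^ k) * x / log x ^ k = x / log x ^ k + 2 ^ k * x / log x ^ k by ring]

theorem eventually_log_pow_le_mul_sqrt (k : ℕ) {c : ℝ} (hc : 0 < c) :
    ∀ᶠ x in atTop, log x ^ k ≤ c * √x := by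
  filter_upwards [(isLittleO_log_rpow_rpow_atTop k one_half_pos).bound hc,
    eventually_ge_atTop 1] with x hbound hx
  rwa [norm_of_nonneg (rpow_nonneg (log_nonneg hx) _), norm_of_nonneg (by positivity),
    rpow_natCast, ← sqrt_eq_rpow] at hbound

theorem eventually_integral_one_div_log_pow_le (k : ℕ) :
    ∀ᶠ x in atTop, ∀ a ∈ Set.Icc 2 x,
      ∫ u in a..x, 1 / log u ^ k ≤ (1 + 2 ^ k) * x / log x ^ k := by
  filter_upwards [eventually_ge_atTop 4,
    eventually_log_pow_le_mul_sqrt k (pow_pos (log_pos one_lt_two) k)] with x hx hlog a ha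
  calc ∫ u in a..x, 1 / log u ^ k ≤ ∫ u in (2 : ℝ)..x, 1 / log u ^ k :=
        intervalIntegral.integral_mono_interval ha.1 ha.2 le_rfl
          ((ae_restrict_of_forall_mem measurableSet_Ioc) fun u hu => by
            have := log_pos (one_lt_two.trans hu.1)
            positivity)
          (intervalIntegrable_one_div_log_pow k one_lt_two (by linarith))
    _ ≤ (1 + 2 ^ k) * x / log x ^ k := integral_one_div_log_pow_le_of_log_pow_le k hx hlog

theorem sum_Ioc_mul_factorial_div_pow_le (J : ℕ) {a N L : ℝ} (ha : 0 ≤ a) (hN : 1 ≤ N)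
    (hL : 0 < L) :
    ∑ j ∈ Ioc 1 J, a * ((j - 1).factorial : ℝ) / (N * L) ^ j ≤
      a / N ^ 2 * ∑ j ∈ Ioc 1 J, ((j - 1).factorial : ℝ) / L ^ j := by
  rw [mul_sum]
  refine sum_le_sum fun j hj => ?_
  have hN2 : N ^ 2 ≤ N ^ j := pow_le_pow_right₀ hN (mem_Ioc.1 hj).1
  rw [mul_pow, div_mul_div_comm]
  gcongr

theorem exists_abs_le_one_eq_mul {y b : ℝ} (h : |y| ≤ b) :
    ∃ θ, |θ| ≤ 1 ∧ y = θ * b := by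
  rcases (abs_nonneg y).trans h |>.eq_or_lt with rfl | hb
  · exact ⟨0, by simp, by simpa using h⟩
  · exact ⟨y / b, by rwa [abs_div, abs_of_pos hb, div_le_one hb], by field_simp⟩

theorem exists_sum_Icc_mul_factorial_div_pow_eq {J : ℕ} (hJ : 1 ≤ J) {a N L C : ℝ}
    (ha : 0 ≤ a) (hN : 1 ≤ N) (hL : 0 < L)
    (hC : ∑ j ∈ Ioc 1 J, ((j - 1).factorial : ℝ) / L ^ j ≤ C) :
    ∃ θ, |θ| ≤ 1 ∧
      ∑ j ∈ Icc 1 J, a * ((j - 1).factorial : ℝ) / (N * L) ^ j =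
        a / N * (1 / L + θ * C / N) := by
  have htail :
      |∑ j ∈ Ioc 1 J, a * ((j - 1).factorial : ℝ) / (N * L) ^ j| ≤ C * a / N ^ 2 := by
    rw [abs_of_nonneg (sum_nonneg fun j _ => by positivity)]
    calc _ ≤ a / N ^ 2 * ∑ j ∈ Ioc 1 J, ((j - 1).factorial : ℝ) / L ^ j :=
          sum_Ioc_mul_factorial_div_pow_le J ha hN hL
      _ ≤ a / N ^ 2 * C := by gcongr
      _ = C * a / N ^ 2 := by ring
  obtain ⟨θ, hθ, htail_eq⟩ := exists_abs_le_one_eq_mul htail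
  refine ⟨θ, hθ, ?_⟩
  have : N ≠ 0 := by positivity
  rw [Icc_eq_cons_Ioc hJ, sum_cons, htail_eq]
  field_simp
  ring

theorem eventually_abs_factorial_mul_integral_le (K : ℕ) :
    ∀ᶠ v in atTop, ∀ n : ℕ,
      |K.factorial * ∫ u in (2 : ℝ) ^ (n + 1)..v ^ (n + 1), 1 / log u ^ (K + 1)| ≤
        K.factorial * (1 + 2 ^ (K + 1)) * v ^ (n + 1) / (((n : ℝ) + 1) * log v) ^ (K + 1) := by
  obtain ⟨X, hX⟩ := eventually_atTop.1 (eventually_integral_one_div_log_pow_le (K + 1))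
  filter_upwards [eventually_ge_atTop X, eventually_ge_atTop 2] with v hXv hv n
  have ha : (2 : ℝ) ≤ 2 ^ (n + 1) := le_self_pow₀ one_le_two n.succ_ne_zero
  have hax : (2 : ℝ) ^ (n + 1) ≤ v ^ (n + 1) := pow_le_pow_left₀ zero_le_two hv _
  have hvx : v ≤ v ^ (n + 1) := le_self_pow₀ (by linarith) n.succ_ne_zero
  rw [abs_of_nonneg (mul_nonneg (by positivity)
    (integral_one_div_log_pow_nonneg _ (by linarith) hax))]
  calc _ ≤ K.factorial * ((1 + 2 ^ (K + 1)) * v ^ (n + 1) / log (v ^ (n + 1)) ^ (K + 1)) := by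
        gcongr
        exact hX _ (hXv.trans hvx) _ ⟨ha, hax⟩
    _ = _ := by rw [log_pow]; push_cast; ring

theorem integral_pow_div_log_eq (n J : ℕ) {v : ℝ} (hv : 2 ≤ v) :
    ∫ t in (2 : ℝ)..v, t ^ n / log t =
      ∑ j ∈ Icc 1 J, v ^ (n + 1) * ((j - 1).factorial : ℝ) / (((n : ℝ) + 1) * log v) ^ j -
        ∑ j ∈ Icc 1 J, 2 ^ (n + 1) * ((j - 1).factorial : ℝ) / (((n : ℝ) + 1) * log 2) ^ j +
        J.factorial * ∫ u in (2 : ℝ) ^ (n + 1)..v ^ (n + 1), 1 / log u ^ (J + 1) := by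
  have h2 : (2 : ℝ) ≤ 2 ^ (n + 1) := le_self_pow₀ one_le_two (Nat.succ_ne_zero n)
  rw [integral_pow_div_log_eq_integral_one_div_log n zero_le_two hv,
    integral_one_div_log_eq_sum_add J (one_lt_two.trans_le h2)
      (pow_le_pow_left₀ zero_le_two hv _),
    ← sum_sub_distrib, log_pow, log_pow]
  congr 2 with j
  push_cast
  ring

theorem integral_power_over_log_asymptotic_expansion (J : ℕ) (hJ : 1 ≤ J) :
    ∃ C : ℝ, 0 < C ∧ ∃ v₀ : ℝ, ∀ n : ℕ, ∀ v ≥ v₀,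
      ∃ θ₁ θ₂ : ℝ, |θ₁| ≤ 1 ∧ |θ₂| ≤ 1 ∧
        (∫ t in (2 : ℝ)..v, t ^ n / Real.log t) =
          (∑ j ∈ Finset.Icc 1 J,
              v ^ (n + 1) * (Nat.factorial (j - 1) : ℝ) /
                (((n : ℝ) + 1) * Real.log v) ^ j) -
            (2 ^ (n + 1) / ((n : ℝ) + 1)) * (1 / Real.log 2 + θ₁ * C / ((n : ℝ) + 1)) +
            θ₂ * C * v ^ (n + 1) / (((n : ℝ) + 1) * Real.log v) ^ (J + 1) := by
  obtain ⟨v₀, hv₀⟩ := eventually_atTop.1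
    ((eventually_abs_factorial_mul_integral_le J).and (eventually_ge_atTop 2))
  set C₁ := ∑ j ∈ Ioc 1 J, ((j - 1).factorial : ℝ) / log 2 ^ j
  set C₂ := (J.factorial : ℝ) * (1 + 2 ^ (J + 1))
  have hC₁ : 0 ≤ C₁ := sum_nonneg fun j _ => by positivity
  have hC₂ : 0 ≤ C₂ := by positivity
  refine ⟨C₁ + C₂ + 1, by positivity, v₀, fun n v hv => ?_⟩
  obtain ⟨hremainder, hv2⟩ := hv₀ v hv
  have hlogv : 0 < log v := log_pos (by linarith)
  obtain ⟨θ₁, hθ₁, hboundary⟩ := exists_sum_Icc_mul_factorial_div_pow_eq hJ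
    (a := 2 ^ (n + 1)) (N := n + 1) (by positivity) (by simp) (log_pos one_lt_two)
    (show C₁ ≤ C₁ + C₂ + 1 by linarith)
  obtain ⟨θ₂, hθ₂, hremainder_eq⟩ := exists_abs_le_one_eq_mul <| (hremainder n).trans
    (show C₂ * v ^ (n + 1) / (((n : ℝ) + 1) * log v) ^ (J + 1) ≤
      (C₁ + C₂ + 1) * v ^ (n + 1) / (((n : ℝ) + 1) * log v) ^ (J + 1) by gcongr; linarith)
  refine ⟨θ₁, θ₂, hθ₁, hθ₂, ?_⟩
  rw [integral_pow_div_log_eq n J hv2, hboundary, hremainder_eq]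
  ring
end

section
/- Let 0 < ε < 1 and C > 0. There exist constants C' and x₁ (depending on ε and C) such that for all x ≥ x₁ and all h > −1 + ε with |log(1+h)| ≤ C · √(log₂ x)/(log₃ x)^{3/2}, one has | ρ_{x^{1+h}} − ρ_x | ≤ C' / (log₃ x)². -/
open Real Filter Finset

/-!
Put `ξ = log log x` and `S(v) = ∑_{q < e^v prime} 1/(q - 1 + v)`, so that `ρ_x` is the least
`v > 0` with `ξ ≤ v² S(v)`; write `ρ(ξ)` for it. Since `v S(v)` is nondecreasing, multiplying an
admissible `v` for `ξ` by `t ≥ 1` gives an admissible `v` for `tξ`. Hence `ρ` is nondecreasing and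
`ρ(ξ)/ξ` nonincreasing, which gives `|ρ(ξ + δ) - ρ(ξ)| ≤ (ρ(ξ)/ξ) |δ|`; replacing `x` by `x^{1+h}`
shifts `ξ` by `δ = log (1 + h)`. Chebyshev's bound `π(m) ≥ m / (2 log m)` and partial summation
against `1/(m - 1 + v)` give `S(v) ≥ (log v)/16` for large `v`, hence `ρ(ξ) ≤ 8 √(ξ / log ξ)`, and
then `(ρ(ξ)/ξ) |δ| ≤ 8 C / (log ξ)²`.
-/

open scoped Nat.Prime Pointwise

theorem sum_primesBelow_eq_by_parts {R : Type*} [CommRing R] (f : ℕ → R) (n : ℕ) :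
    ∑ p ∈ Nat.primesBelow n, f p =
      π' n * f n + ∑ m ∈ range n, π m * (f m - f (m + 1)) := by
  induction n with
  | zero => simp [Nat.primeCounting']
  | succ n ih =>
    have hπ : (π n : R) = π' n + if n.Prime then 1 else 0 := by
      rw [Nat.primeCounting, Nat.primeCounting', Nat.count_succ]; push_cast; rfl
    rw [Nat.primesBelow_succ, sum_range_succ, ← Nat.primeCounting]
    split_ifs at hπ ⊢ with hn
    · rw [sum_insert (Nat.notMem_primesBelow n), ih, hπ]; ring
    · rw [ih, hπ]; ring

theorem sum_Ico_primeCounting_mul_sub_le {R : Type*} [CommRing R] [LinearOrder R]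
    [IsStrictOrderedRing R] {f : ℕ → R} (hf : Antitone f) (hf0 : ∀ n, 0 ≤ f n) (M n : ℕ) :
    ∑ m ∈ Ico M n, π m * (f m - f (m + 1)) ≤ ∑ p ∈ Nat.primesBelow n, f p := by
  have hterm : ∀ m, 0 ≤ (π m : R) * (f m - f (m + 1)) := fun m =>
    mul_nonneg (Nat.cast_nonneg _) (sub_nonneg.2 (hf m.le_succ))
  rw [sum_primesBelow_eq_by_parts]
  calc ∑ m ∈ Ico M n, (π m : R) * (f m - f (m + 1))
      ≤ ∑ m ∈ range n, π m * (f m - f (m + 1)) :=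
        sum_le_sum_of_subset_of_nonneg (fun m hm => mem_range.2 (mem_Ico.1 hm).2)
          fun m _ _ => hterm m
    _ ≤ _ := le_add_of_nonneg_left (mul_nonneg (Nat.cast_nonneg _) (hf0 n))

theorem eventually_div_two_mul_log_le_primeCounting :
    ∀ᶠ n : ℕ in atTop, (n : ℝ) / (2 * log n) ≤ π n := by
  have hc : 0 < log 2 - 1 / 2 := by linarith [log_two_gt_d9]
  have hlog : ∀ᶠ n : ℕ in atTop, log ((n : ℝ) + 1) ≤ (log 2 - 1 / 2) / 2 * ((n : ℝ) + 1) := by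
    refine (tendsto_atTop_add_const_right _ (1 : ℝ) tendsto_natCast_atTop_atTop).eventually
      (p := fun x => log x ≤ (log 2 - 1 / 2) / 2 * x) ?_
    filter_upwards [isLittleO_log_id_atTop.bound (half_pos hc), eventually_gt_atTop 0]
      with x hx hx0
    rw [norm_eq_abs, norm_eq_abs, id, abs_of_pos hx0] at hx
    exact (le_abs_self _).trans hx
  filter_upwards [hlog, eventually_ge_atTop 2] with n hn h2
  have h2' : (2 : ℝ) ≤ n := by exact_mod_cast h2
  have hlogn : 0 < log n := log_pos (by linarith)
  refine le_trans ?_ (Chebyshev.pi_ge n)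
  calc (n : ℝ) / (2 * log n) = (n / 2) / log n := by ring
    _ ≤ _ := by gcongr; nlinarith

theorem log_log_add_one_sub_log_log_le {x : ℝ} (hx : 1 < x) :
    log (log (x + 1)) - log (log x) ≤ 1 / (x * log x) := by
  have hx0 : 0 < x := by linarith
  have hlogx : 0 < log x := log_pos hx
  have hstep : log (x + 1) - log x ≤ 1 / x := by
    rw [← log_div (by linarith) hx0.ne']
    calc log ((x + 1) / x) ≤ (x + 1) / x - 1 := log_le_sub_one_of_pos (by positivity)
      _ = 1 / x := by field_simp; ring
  rw [← log_div (log_pos (by linarith)).ne' hlogx.ne']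
  calc log (log (x + 1) / log x) ≤ log (x + 1) / log x - 1 :=
        log_le_sub_one_of_pos (div_pos (log_pos (by linarith)) hlogx)
    _ = (log (x + 1) - log x) / log x := by field_simp
    _ ≤ 1 / x / log x := by gcongr
    _ = 1 / (x * log x) := by rw [div_div]

theorem eventually_log_log_add_one_le : ∀ᶠ v in atTop, log (log (v + 1)) ≤ log v / 2 := by
  have h : ∀ᶠ u in atTop, log 2 + log u ≤ u / 2 := by
    filter_upwards [isLittleO_log_id_atTop.bound (by norm_num : (0 : ℝ) < 1 / 4),
      eventually_ge_atTop (4 * log 2), eventually_gt_atTop 0] with u hu h4 h0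
    rw [norm_eq_abs, norm_eq_abs, id, abs_of_pos h0] at hu
    linarith [le_abs_self (log u)]
  filter_upwards [tendsto_log_atTop.eventually h, eventually_ge_atTop 2] with v hv h2
  have hlogv : 0 < log v := log_pos (by linarith)
  calc log (log (v + 1)) ≤ log (log (v ^ 2)) := by
        gcongr
        · exact log_pos (by linarith)
        · nlinarith
    _ = log 2 + log (log v) := by
        rw [log_pow, Nat.cast_ofNat, log_mul two_ne_zero hlogv.ne']
    _ ≤ log v / 2 := hv

theorem tendsto_div_log_atTop : Tendsto (fun x => x / log x) atTop atTop := by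
  have h : Tendsto (fun x => log x / x) atTop (nhdsWithin 0 (Set.Ioi 0)) :=
    tendsto_nhdsWithin_iff.2 ⟨isLittleO_log_id_atTop.tendsto_div_nhds_zero,
      by filter_upwards [eventually_gt_atTop 1] with x hx using div_pos (log_pos hx) (by linarith)⟩
  simpa only [Pi.inv_def, inv_div] using h.inv_tendsto_nhdsGT_zero

theorem abs_sub_le_of_monotoneOn_of_antitoneOn_div {f : ℝ → ℝ} (hf : MonotoneOn f (Set.Ioi 0))
    (hf' : AntitoneOn (fun t => f t / t) (Set.Ioi 0)) {a b : ℝ} (ha : 0 < a) (hb : 0 < b) :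
    |f b - f a| ≤ f a / a * |b - a| := by
  have hfa : f a = f a / a * a := by field_simp
  have hfb : f b = f b / b * b := by field_simp
  rcases le_total a b with hab | hba
  · rw [abs_of_nonneg (sub_nonneg.2 (hf ha hb hab)), abs_of_nonneg (sub_nonneg.2 hab)]
    have := hf' ha hb hab
    calc f b - f a = f b / b * b - f a / a * a := by rw [← hfa, ← hfb]
      _ ≤ f a / a * b - f a / a * a := by gcongr
      _ = f a / a * (b - a) := by ring
  · rw [abs_of_nonpos (sub_nonpos.2 (hf hb ha hba)), abs_of_nonpos (sub_nonpos.2 hba)]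
    have := hf' hb ha hba
    calc -(f b - f a) = f a / a * a - f b / b * b := by rw [← hfa, ← hfb]; ring
      _ ≤ f a / a * a - f a / a * b := by gcongr
      _ = f a / a * -(b - a) := by ring

theorem sub_log_log_div_eight_le_primeCounting_mul {v : ℝ} {m : ℕ} (hv : 1 < v) (hvm : v ≤ m)
    (hπ : (m : ℝ) / (2 * log m) ≤ π m) :
    (log (log ((m : ℝ) + 1)) - log (log m)) / 8 ≤ π m * (1 / ((m : ℝ) - 1 + v) - 1 / (m + v)) := by
  have hm1 : 1 < (m : ℝ) := by linarith
  have hlogm : 0 < log m := log_pos hm1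
  have hgap : 1 / (4 * (m : ℝ) ^ 2) ≤ 1 / ((m : ℝ) - 1 + v) - 1 / (m + v) := by
    rw [div_sub_div _ _ (by linarith) (by linarith),
      show (1 : ℝ) * (m + v) - (m - 1 + v) * 1 = 1 by ring]
    exact one_div_le_one_div_of_le (by nlinarith) (by nlinarith)
  calc (log (log ((m : ℝ) + 1)) - log (log m)) / 8 ≤ 1 / (m * log m) / 8 := by
        gcongr; exact log_log_add_one_sub_log_log_le hm1
    _ = (m / (2 * log m)) * (1 / (4 * m ^ 2)) := by field_simp; ring
    _ ≤ π m * (1 / ((m : ℝ) - 1 + v) - 1 / (m + v)) := by gcongr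

noncomputable def primeSum (v : ℝ) : ℝ :=
  ∑ q ∈ Nat.primesBelow ⌈exp v⌉₊, 1 / ((q : ℝ) - 1 + v)

theorem eventually_log_div_le_primeSum : ∀ᶠ v in atTop, log v / 16 ≤ primeSum v := by
  obtain ⟨m₀, hm₀⟩ := eventually_atTop.1 eventually_div_two_mul_log_le_primeCounting
  filter_upwards [eventually_ge_atTop (max (m₀ : ℝ) 2), eventually_log_log_add_one_le]
    with v hv hloglog
  have hv2 : 2 ≤ v := le_of_max_le_right hv
  set M := ⌈v⌉₊
  set N := ⌈exp v⌉₊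
  set f : ℕ → ℝ := fun m => 1 / ((m : ℝ) - 1 + v)
  set φ : ℕ → ℝ := fun m => log (log m)
  have hM : v ≤ M := Nat.le_ceil v
  have hN : exp v ≤ N := Nat.le_ceil _
  have hMN : M ≤ N := Nat.ceil_le_ceil (by linarith [add_one_le_exp v])
  have hf : Antitone f := antitone_nat_of_succ_le fun m => by
    simp only [f]; push_cast; gcongr <;> linarith [(m.cast_nonneg : (0 : ℝ) ≤ m)]
  have hterm : ∀ m ∈ Ico M N, (φ (m + 1) - φ m) / 8 ≤ π m * (f m - f (m + 1)) := by
    intro m hm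
    have hvm : v ≤ m := hM.trans (by exact_mod_cast (mem_Ico.1 hm).1)
    simp only [f, φ, Nat.cast_succ, add_sub_cancel_right]
    exact sub_log_log_div_eight_le_primeCounting_mul (by linarith) hvm
      (hm₀ m (by exact_mod_cast (le_max_left _ _).trans (hv.trans hvm)))
  have hφN : log v ≤ φ N :=
    log_le_log (by linarith) ((le_log_iff_exp_le (by linarith [exp_pos v])).2 hN)
  have hφM : φ M ≤ log v / 2 := by
    refine le_trans ?_ hloglog
    show log (log M) ≤ _
    gcongr
    · exact log_pos (by linarith)
    · exact (Nat.ceil_lt_add_one (by linarith)).le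
  calc log v / 16 ≤ (φ N - φ M) / 8 := by linarith
    _ = ∑ m ∈ Ico M N, (φ (m + 1) - φ m) / 8 := by rw [← sum_div, sum_Ico_sub _ hMN]
    _ ≤ ∑ m ∈ Ico M N, π m * (f m - f (m + 1)) := sum_le_sum hterm
    _ ≤ ∑ p ∈ Nat.primesBelow N, f p :=
        sum_Ico_primeCounting_mul_sub_le hf (fun m => one_div_nonneg.2 (by
          linarith [(m.cast_nonneg : (0 : ℝ) ≤ m)])) M N
    _ = primeSum v := rfl

theorem tendsto_sq_mul_primeSum_atTop : Tendsto (fun v => v ^ 2 * primeSum v) atTop atTop := by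
  refine tendsto_atTop_mono' _ ?_ ((tendsto_pow_atTop two_ne_zero).atTop_div_const
    (by norm_num : (0 : ℝ) < 16))
  filter_upwards [eventually_log_div_le_primeSum, eventually_ge_atTop (exp 1)] with v hS hv
  have hlog : 1 ≤ log v := (le_log_iff_exp_le (by linarith [exp_pos 1])).2 hv
  calc v ^ 2 / 16 = v ^ 2 * (1 / 16) := by ring
    _ ≤ v ^ 2 * primeSum v := by gcongr; linarith

theorem monotoneOn_mul_primeSum : MonotoneOn (fun v => v * primeSum v) (Set.Ioi 0) := by
  intro v (hv : 0 < v) w (hw : 0 < w) hvw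
  have hq : ∀ {n q : ℕ}, q ∈ Nat.primesBelow n → (1 : ℝ) ≤ q := fun hq => by
    exact_mod_cast (Nat.two_le_of_mem_primesBelow hq).trans' one_le_two
  simp only [primeSum, mul_sum, mul_one_div]
  calc ∑ q ∈ Nat.primesBelow ⌈exp v⌉₊, v / ((q : ℝ) - 1 + v)
      ≤ ∑ q ∈ Nat.primesBelow ⌈exp v⌉₊, w / ((q : ℝ) - 1 + w) := by
        refine sum_le_sum fun q hq' => ?_
        have := hq hq'
        rw [div_le_div_iff₀ (by linarith) (by linarith)]
        nlinarith
    _ ≤ ∑ q ∈ Nat.primesBelow ⌈exp w⌉₊, w / ((q : ℝ) - 1 + w) :=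
        sum_le_sum_of_subset_of_nonneg
          (Nat.primesBelow_mono (Nat.ceil_mono (exp_le_exp.2 hvw)))
          fun q hq' _ => div_nonneg hw.le (by linarith [hq hq'])

def rhoSet (ξ : ℝ) : Set ℝ := {v | 0 < v ∧ ξ ≤ v ^ 2 * primeSum v}

noncomputable def rhoXi (ξ : ℝ) : ℝ := sInf (rhoSet ξ)

theorem Psi_nonpos_iff {x v : ℝ} (hv : 0 < v) :
    Psi x v ≤ 0 ↔ log (log x) ≤ v ^ 2 * primeSum v := by
  rw [Psi, sub_nonpos, div_le_iff₀ (by positivity), mul_comm, primeSum,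
    Nat.primesBelow_eq_filter_range]

theorem rho_eq_rhoXi (x : ℝ) : rho x = rhoXi (log (log x)) :=
  congrArg sInf (Set.ext fun _ => and_congr_right Psi_nonpos_iff)

theorem bddBelow_rhoSet (ξ : ℝ) : BddBelow (rhoSet ξ) := ⟨0, fun _ hv => hv.1.le⟩

theorem rhoSet_nonempty (ξ : ℝ) : (rhoSet ξ).Nonempty :=
  ((tendsto_sq_mul_primeSum_atTop.eventually (eventually_ge_atTop ξ)).and
    (eventually_gt_atTop 0)).exists.imp fun _ hv => ⟨hv.2, hv.1⟩

theorem rhoXi_mono : Monotone rhoXi := fun _ _ hab =>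
  csInf_le_csInf (bddBelow_rhoSet _) (rhoSet_nonempty _) fun _ hv => ⟨hv.1, hab.trans hv.2⟩

theorem smul_rhoSet_subset {t : ℝ} (ht : 1 ≤ t) (ξ : ℝ) : t • rhoSet ξ ⊆ rhoSet (t * ξ) := by
  rintro _ ⟨v, ⟨hv, hξ⟩, rfl⟩
  have ht0 : 0 < t := by linarith
  have htv : v ≤ t * v := le_mul_of_one_le_left hv.le ht
  refine ⟨by simp only [smul_eq_mul]; positivity, ?_⟩
  simp only [smul_eq_mul]
  calc t * ξ ≤ t * v * (v * primeSum v) := by rw [mul_assoc, ← mul_assoc v, ← sq]; gcongr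
    _ ≤ t * v * (t * v * primeSum (t * v)) := mul_le_mul_of_nonneg_left
        (monotoneOn_mul_primeSum hv (show 0 < t * v by positivity) htv) (by positivity)
    _ = (t * v) ^ 2 * primeSum (t * v) := by ring

theorem rhoXi_mul_le {t : ℝ} (ht : 1 ≤ t) (ξ : ℝ) : rhoXi (t * ξ) ≤ t * rhoXi ξ := by
  calc rhoXi (t * ξ) ≤ sInf (t • rhoSet ξ) :=
        csInf_le_csInf (bddBelow_rhoSet _) (rhoSet_nonempty ξ).smul_set (smul_rhoSet_subset ht ξ)
    _ = t * rhoXi ξ := Real.sInf_smul_of_nonneg (by linarith) _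

theorem antitoneOn_rhoXi_div : AntitoneOn (fun ξ => rhoXi ξ / ξ) (Set.Ioi 0) := by
  intro a (ha : 0 < a) b (hb : 0 < b) hab
  have h := rhoXi_mul_le ((one_le_div ha).2 hab) a
  rw [div_mul_cancel₀ _ ha.ne'] at h
  rw [div_le_div_iff₀ hb ha]
  calc rhoXi b * a ≤ b / a * rhoXi a * a := by gcongr
    _ = rhoXi a * b := by field_simp

theorem eventually_rhoXi_le : ∀ᶠ ξ in atTop, rhoXi ξ ≤ 8 * √(ξ / log ξ) := by
  have hv : Tendsto (fun ξ => 8 * √(ξ / log ξ)) atTop atTop :=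
    (tendsto_sqrt_atTop.comp tendsto_div_log_atTop).const_mul_atTop (by norm_num)
  have hlog : ∀ᶠ L in atTop, log L ≤ L / 2 := by
    filter_upwards [isLittleO_log_id_atTop.bound (by norm_num : (0 : ℝ) < 1 / 2),
      eventually_gt_atTop 0] with L hL h0
    rw [norm_eq_abs, norm_eq_abs, id, abs_of_pos h0] at hL
    linarith [le_abs_self (log L)]
  filter_upwards [hv.eventually eventually_log_div_le_primeSum, tendsto_log_atTop.eventually hlog,
    tendsto_log_atTop.eventually (eventually_gt_atTop 0), eventually_gt_atTop 0]
    with ξ hS hL hL0 hξ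
  refine csInf_le (bddBelow_rhoSet ξ) ⟨by positivity, ?_⟩
  have hsq : (8 * √(ξ / log ξ)) ^ 2 = 64 * ξ / log ξ := by
    rw [mul_pow, sq_sqrt (by positivity)]; ring
  have hlogv : log ξ / 4 ≤ log (8 * √(ξ / log ξ)) := by
    rw [log_mul (by norm_num) (by positivity), log_sqrt (by positivity), log_div hξ.ne' hL0.ne']
    linarith [log_pos (by norm_num : (1 : ℝ) < 8)]
  calc ξ = 64 * ξ / log ξ * (log ξ / 64) := by field_simp
    _ ≤ (8 * √(ξ / log ξ)) ^ 2 * primeSum (8 * √(ξ / log ξ)) := by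
        rw [hsq]; gcongr; linarith

theorem eventually_abs_rhoXi_add_sub_le (C : ℝ) :
    ∀ᶠ ξ in atTop, ∀ δ : ℝ, |δ| ≤ C * √ξ / log ξ ^ ((3 : ℝ) / 2) →
      |rhoXi (ξ + δ) - rhoXi ξ| ≤ 8 * C / log ξ ^ 2 := by
  filter_upwards [eventually_rhoXi_le, eventually_ge_atTop (exp 1), eventually_gt_atTop (C ^ 2)]
    with ξ hρ he hC δ hδ
  have hξ : 0 < ξ := (exp_pos 1).trans_le he
  have hL : 1 ≤ log ξ := (le_log_iff_exp_le hξ).2 he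
  have hP : log ξ ^ ((3 : ℝ) / 2) = log ξ * √(log ξ) := by
    rw [sqrt_eq_rpow, ← rpow_one_add' (by linarith) (by norm_num)]; norm_num
  have hδξ : |δ| < ξ :=
    calc |δ| ≤ C * √ξ / log ξ ^ ((3 : ℝ) / 2) := hδ
      _ ≤ |C| * √ξ / log ξ ^ ((3 : ℝ) / 2) := by gcongr; exact le_abs_self C
      _ ≤ |C| * √ξ := div_le_self (by positivity) (one_le_rpow hL (by norm_num))
      _ < √ξ * √ξ := by gcongr; exact (lt_sqrt (abs_nonneg C)).2 (by rwa [sq_abs])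
      _ = ξ := mul_self_sqrt hξ.le
  have hξδ : 0 < ξ + δ := by linarith [neg_abs_le δ]
  calc |rhoXi (ξ + δ) - rhoXi ξ| ≤ rhoXi ξ / ξ * |ξ + δ - ξ| :=
        abs_sub_le_of_monotoneOn_of_antitoneOn_div (rhoXi_mono.monotoneOn _)
          antitoneOn_rhoXi_div hξ hξδ
    _ ≤ 8 * √(ξ / log ξ) / ξ * (C * √ξ / log ξ ^ ((3 : ℝ) / 2)) := by
        rw [add_sub_cancel_left]; gcongr
    _ = 8 * C / log ξ ^ 2 := by
        have : 0 < √(log ξ) := sqrt_pos.2 (by linarith)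
        have : 0 < √ξ := sqrt_pos.2 hξ
        rw [hP, sqrt_div hξ.le]
        field_simp
        rw [sq_sqrt hξ.le, sq_sqrt (by linarith)]
        ring

theorem rho_local_behaviour_general (ε C : ℝ) (hε : 0 < ε) :
    ∃ C' : ℝ, ∃ x₁ : ℝ, ∀ x ≥ x₁, ∀ h : ℝ, -1 + ε < h →
      |Real.log (1 + h)| ≤ C * Real.sqrt (Real.log (Real.log x)) /
          Real.log (Real.log (Real.log x)) ^ ((3 : ℝ) / 2) →
      |rho (x ^ (1 + h)) - rho x| ≤ C' / Real.log (Real.log (Real.log x)) ^ 2 := by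
  obtain ⟨x₁, hx₁⟩ := eventually_atTop.1 <|
    ((tendsto_log_atTop.comp tendsto_log_atTop).eventually
      (eventually_abs_rhoXi_add_sub_le C)).and (eventually_gt_atTop 1)
  refine ⟨8 * C, x₁, fun x hx h hh hδ => ?_⟩
  obtain ⟨hρ, hx1⟩ := hx₁ x hx
  have hloglog : log (log (x ^ (1 + h))) = log (log x) + log (1 + h) := by
    rw [log_rpow (by linarith), log_mul (by linarith) (log_pos hx1).ne', add_comm]
  rw [rho_eq_rhoXi, rho_eq_rhoXi, hloglog]
  exact hρ _ hδ

theorem rho_local_behaviour (ε C : ℝ) (hε : 0 < ε) (hε1 : ε < 1) (hC : 0 < C) :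
    ∃ C' : ℝ, ∃ x₁ : ℝ, ∀ x ≥ x₁, ∀ h : ℝ, -1 + ε < h →
      |Real.log (1 + h)| ≤ C * Real.sqrt (Real.log (Real.log x)) /
          Real.log (Real.log (Real.log x)) ^ ((3 : ℝ) / 2) →
      |rho (x ^ (1 + h)) - rho x| ≤ C' / Real.log (Real.log (Real.log x)) ^ 2 :=
  rho_local_behaviour_general ε C hε
end

section
/- There is a constant C such that for all x ≥ 3, all real y with 2 ≤ y ≤ log x, and all complex z with |z| = 1: | λ_{Ω,x}(y,z) − 1/F_Ω(y, 1/z) | ≤ C / log x. -/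
open Real Filter Finset
open scoped Classical

/-- `P⁺(m)`: the largest prime factor of `m`, with `P⁺(1) = 1`. -/
def Pplus (m : ℕ) : ℕ := if m = 1 then 1 else m.primeFactors.sup id

/-- `λ_{Ω,x}(y, z) = ∑_{m ≥ 1, P⁺(m) ≤ y, Ω(m) ≤ (3/2) log log x} z^{−Ω(m)}/m`. -/
noncomputable def lambdaBigOmega (x y : ℝ) (z : ℂ) : ℂ :=
  ∑' m : ℕ,
    if 1 ≤ m ∧ (Pplus m : ℝ) ≤ y ∧
        (m.primeFactorsList.length : ℝ) ≤ 3 / 2 * Real.log (Real.log x) then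
      z ^ (-(m.primeFactorsList.length : ℤ)) / (m : ℂ)
    else 0

/-- `F_Ω(y, z) = ∏_{q ≤ y, q prime, q ≠ z} (1 − z/q)` (complex version). -/
noncomputable def FbigOmegaC (y : ℝ) (z : ℂ) : ℂ :=
  ∏ q ∈ (Finset.range (⌊y⌋₊ + 1)).filter Nat.Prime,
    if (q : ℂ) = z then 1 else 1 - z / (q : ℂ)

open scoped ArithmeticFunction.Omega
open scoped Chebyshev

/-!
Both `λ_{Ω,x}(y, z)` and `1 / F_Ω(y, 1/z)` are sums of the completely multiplicative weight
`m ↦ z^{-Ω(m)} / m` over the `y`-smooth numbers: the latter is the full Euler product, the former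
drops the `m` with `Ω(m) > (3/2) ξ`. Rankin's trick bounds that tail by
`1.99^{-(3/2) ξ} ∏_{p ≤ y} (1 - 1.99/p)⁻¹`. The product is `exp (O (∑_{p ≤ y} 1/p))`, and
Chebyshev's bound `θ(t) ≤ t log 4` on dyadic blocks gives `∑_{p ≤ y} 1/p = O (log log y) = O (log ξ)`.
As `(3/2) log 1.99 > 1`, the tail is `O (e^{-ξ}) = O (1 / log x)`.
-/

lemma sum_inv_primes_Ico_two_pow_le {k : ℕ} (hk : 1 ≤ k) :
    ∑ p ∈ Ico (2 ^ k : ℕ) (2 ^ (k + 1)) with p.Prime, (p : ℝ)⁻¹ ≤ 4 / k := by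
  set B := {p ∈ Ico (2 ^ k : ℕ) (2 ^ (k + 1)) | p.Prime}
  have hterm : ∀ p ∈ B, (p : ℝ)⁻¹ ≤ log p / (k * log 2 * 2 ^ k) := by
    intro p hp
    have h2k : (2 : ℝ) ^ k ≤ p := by exact_mod_cast (mem_Ico.mp (mem_filter.mp hp).1).1
    have hlogp : k * log 2 ≤ log p := by
      rw [← log_pow]
      exact log_le_log (by positivity) h2k
    rw [le_div_iff₀ (by positivity), inv_mul_le_iff₀ (h2k.trans_lt' (by positivity))]
    calc k * log 2 * 2 ^ k ≤ log p * p := by gcongr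
      _ = p * log p := mul_comm _ _
  have htheta : ∑ p ∈ B, log p ≤ θ (2 ^ (k + 1) : ℕ) := by
    rw [Chebyshev.theta_eq_sum_primesLE_log]
    refine sum_le_sum_of_subset_of_nonneg (fun p hp => ?_) fun p _ _ => log_natCast_nonneg p
    obtain ⟨hIco, hp⟩ := mem_filter.mp hp
    exact Nat.mem_primesBelow.mpr ⟨by have := (mem_Ico.mp hIco).2; omega, hp⟩
  calc ∑ p ∈ B, (p : ℝ)⁻¹ ≤ ∑ p ∈ B, log p / (k * log 2 * 2 ^ k) := sum_le_sum hterm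
    _ = (∑ p ∈ B, log p) / (k * log 2 * 2 ^ k) := (sum_div ..).symm
    _ ≤ log 4 * 2 ^ (k + 1) / (k * log 2 * 2 ^ k) := by
        gcongr
        exact_mod_cast htheta.trans (Chebyshev.theta_le_log4_mul_x (by positivity))
    _ = 4 / k := by
        rw [show (4 : ℝ) = 2 ^ 2 by norm_num, log_pow]
        field_simp
        ring

lemma sum_inv_primesBelow_two_pow_le (K : ℕ) :
    ∑ p ∈ Nat.primesBelow (2 ^ (K + 1)), (p : ℝ)⁻¹ ≤ 4 * harmonic K := by
  induction K with
  | zero => simp [Nat.primesBelow_two]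
  | succ K ih =>
    have hsplit : ∑ p ∈ Nat.primesBelow (2 ^ (K + 1 + 1)), (p : ℝ)⁻¹ =
        ∑ p ∈ Nat.primesBelow (2 ^ (K + 1)), (p : ℝ)⁻¹ +
          ∑ p ∈ Ico (2 ^ (K + 1) : ℕ) (2 ^ (K + 1 + 1)) with p.Prime, (p : ℝ)⁻¹ := by
      simp only [Nat.primesBelow, sum_filter]
      exact (sum_range_add_sum_Ico _ (Nat.pow_le_pow_right two_pos (by omega))).symm
    have hblock := sum_inv_primes_Ico_two_pow_le (k := K + 1) le_add_self
    rw [hsplit, harmonic_succ, Rat.cast_add, mul_add]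
    push_cast at hblock ⊢
    rw [← div_eq_mul_inv]
    exact add_le_add ih hblock

lemma sum_inv_primesBelow_le (N : ℕ) :
    ∑ p ∈ N.primesBelow, (p : ℝ)⁻¹ ≤ 4 * (1 + log (Nat.log 2 N)) :=
  calc ∑ p ∈ N.primesBelow, (p : ℝ)⁻¹
      ≤ ∑ p ∈ Nat.primesBelow (2 ^ (Nat.log 2 N + 1)), (p : ℝ)⁻¹ :=
        sum_le_sum_of_subset_of_nonneg
          (Nat.primesBelow_mono (Nat.lt_pow_succ_log_self one_lt_two N).le)
          fun _ _ _ => by positivity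
    _ ≤ 4 * harmonic (Nat.log 2 N) := sum_inv_primesBelow_two_pow_le _
    _ ≤ 4 * (1 + log (Nat.log 2 N)) := by gcongr; exact harmonic_le_one_add_log _

lemma inv_one_sub_le_exp_div {u : ℝ} (hu : u < 1) : (1 - u)⁻¹ ≤ exp (u / (1 - u)) := by
  have h : 0 < 1 - u := by linarith
  calc (1 - u)⁻¹ = u / (1 - u) + 1 := by field_simp; ring
    _ ≤ exp (u / (1 - u)) := add_one_le_exp _

lemma inv_one_sub_div_le_exp {a p : ℝ} (ha0 : 0 ≤ a) (ha : a < 2) (hp : 2 ≤ p) :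
    (1 - a / p)⁻¹ ≤ exp (2 * a / (2 - a) * p⁻¹) := by
  have hpa : 0 < p - a := by linarith
  refine (inv_one_sub_le_exp_div (by rw [div_lt_one (by linarith)]; linarith)).trans ?_
  gcongr
  calc a / p / (1 - a / p) = a / (p - a) := by field_simp
    _ ≤ 2 * a / ((2 - a) * p) := by
        rw [div_le_div_iff₀ hpa (by nlinarith)]
        nlinarith [mul_nonneg (mul_nonneg ha0 ha0) (sub_nonneg.mpr hp)]
    _ = 2 * a / (2 - a) * p⁻¹ := by field_simp

lemma prod_primesBelow_inv_one_sub_div_le {a : ℝ} (ha0 : 0 ≤ a) (ha : a < 2) (N : ℕ) :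
    ∏ p ∈ N.primesBelow, (1 - a / p)⁻¹ ≤
      exp (2 * a / (2 - a) * ∑ p ∈ N.primesBelow, (p : ℝ)⁻¹) := by
  rw [mul_sum, exp_sum]
  refine prod_le_prod (fun p hp => ?_) fun p hp => ?_
  all_goals have hp : (2 : ℝ) ≤ p := by exact_mod_cast (Nat.prime_of_mem_primesBelow hp).two_le
  · exact inv_nonneg.mpr (by rw [sub_nonneg, div_le_one (by linarith)]; linarith)
  · exact inv_one_sub_div_le_exp ha0 ha hp

section BigOmegaWeight

variable {F 𝕜 : Type*} [Field F] [RCLike 𝕜]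

noncomputable def bigOmegaWeight (w : F) : ℕ →* F where
  toFun m := w ^ Ω m / m
  map_one' := by simp
  map_mul' m n := by
    rcases eq_or_ne m 0 with rfl | hm
    · simp
    rcases eq_or_ne n 0 with rfl | hn
    · simp
    simp only [ArithmeticFunction.cardFactors_mul hm hn, pow_add, Nat.cast_mul, mul_div_mul_comm]

lemma bigOmegaWeight_apply (w : F) (m : ℕ) : bigOmegaWeight w m = w ^ Ω m / m := rfl

lemma bigOmegaWeight_prime (w : F) {p : ℕ} (hp : p.Prime) : bigOmegaWeight w p = w / p := by
  rw [bigOmegaWeight_apply, ArithmeticFunction.cardFactors_apply_prime hp, pow_one]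

lemma norm_bigOmegaWeight_prime_lt_one {w : 𝕜} (hw : ‖w‖ < 2) {p : ℕ} (hp : p.Prime) :
    ‖bigOmegaWeight w p‖ < 1 := by
  rw [bigOmegaWeight_prime w hp, norm_div, RCLike.norm_natCast,
    div_lt_one (by exact_mod_cast hp.pos)]
  exact hw.trans_le (by exact_mod_cast hp.two_le)

lemma summable_and_hasSum_indicator_smoothNumbers_bigOmegaWeight {w : 𝕜} (hw : ‖w‖ < 2)
    (N : ℕ) :
    Summable (fun m => ‖N.smoothNumbers.indicator (bigOmegaWeight w) m‖) ∧
      HasSum (N.smoothNumbers.indicator (bigOmegaWeight w))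
        (∏ p ∈ N.primesBelow, (1 - w / p)⁻¹) := by
  obtain ⟨hsum, hprod⟩ :=
    EulerProduct.summable_and_hasSum_smoothNumbers_prod_primesBelow_geometric
      (fun hp => norm_bigOmegaWeight_prime_lt_one hw hp) N
  rw [prod_congr rfl fun p hp => by rw [bigOmegaWeight_prime w (Nat.prime_of_mem_primesBelow hp)]]
    at hprod
  refine ⟨?_, hasSum_subtype_iff_indicator.mp hprod⟩
  simp_rw [norm_indicator_eq_indicator_norm]
  exact summable_subtype_iff_indicator.mp hsum

lemma norm_bigOmegaWeight_le_rpow_mul {w : 𝕜} (hw : ‖w‖ ≤ 1) {a K : ℝ} (ha : 1 ≤ a) {m : ℕ}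
    (hK : K ≤ Ω m) : ‖bigOmegaWeight w m‖ ≤ a ^ (-K) * bigOmegaWeight a m := by
  have hrankin : 1 ≤ a ^ (-K) * a ^ Ω m := by
    rw [← rpow_add_natCast (by linarith)]
    exact one_le_rpow ha (by linarith)
  rw [bigOmegaWeight_apply, bigOmegaWeight_apply, norm_div, norm_pow, RCLike.norm_natCast,
    mul_div_assoc']
  gcongr
  exact (pow_le_one₀ (norm_nonneg w) hw).trans hrankin

lemma norm_tsum_indicator_bigOmegaWeight_le {w : 𝕜} (hw : ‖w‖ ≤ 1) {a : ℝ} (ha1 : 1 ≤ a)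
    (ha2 : a < 2) (N : ℕ) (K : ℝ) :
    ‖∑' m, (N.smoothNumbers \ {m | Ω m ≤ K}).indicator (bigOmegaWeight w) m‖ ≤
      a ^ (-K) * ∏ p ∈ N.primesBelow, (1 - a / p)⁻¹ := by
  obtain ⟨-, hprod⟩ := summable_and_hasSum_indicator_smoothNumbers_bigOmegaWeight (𝕜 := ℝ)
    (w := a) (by rw [norm_of_nonneg (by linarith)]; exact ha2) N
  have hbound : ∀ m, ‖(N.smoothNumbers \ {m | Ω m ≤ K}).indicator (bigOmegaWeight w) m‖ ≤
      a ^ (-K) * N.smoothNumbers.indicator (bigOmegaWeight a) m := by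
    intro m
    by_cases hm : m ∈ N.smoothNumbers \ {m | Ω m ≤ K}
    · rw [Set.indicator_of_mem hm, Set.indicator_of_mem hm.1]
      exact norm_bigOmegaWeight_le_rpow_mul hw ha1 (not_le.mp hm.2).le
    · rw [Set.indicator_of_notMem hm, norm_zero]
      refine mul_nonneg (by positivity) (Set.indicator_nonneg (fun n _ => ?_) m)
      rw [bigOmegaWeight_apply]
      positivity
  have hsummable := hprod.summable.mul_left (a ^ (-K))
  calc _ ≤ ∑' m, ‖(N.smoothNumbers \ {m | Ω m ≤ K}).indicator (bigOmegaWeight w) m‖ :=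
        norm_tsum_le_tsum_norm (hsummable.of_nonneg_of_le (fun _ => norm_nonneg _) hbound)
    _ ≤ ∑' m, a ^ (-K) * N.smoothNumbers.indicator (bigOmegaWeight a) m :=
        (hsummable.of_nonneg_of_le (fun _ => norm_nonneg _) hbound).tsum_le_tsum hbound hsummable
    _ = _ := by rw [tsum_mul_left, hprod.tsum_eq]

end BigOmegaWeight

lemma Pplus_le_iff {m n : ℕ} (hn : 1 ≤ n) :
    Pplus m ≤ n ↔ ∀ p ∈ m.primeFactors, p ≤ n := by
  unfold Pplus
  split_ifs with h1
  · simp [h1, hn]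
  · exact Finset.sup_le_iff

lemma one_le_and_Pplus_le_iff_mem_smoothNumbers {y : ℝ} (hy : 1 ≤ y) {m : ℕ} :
    1 ≤ m ∧ (Pplus m : ℝ) ≤ y ↔ m ∈ (⌊y⌋₊ + 1).smoothNumbers := by
  rw [Nat.mem_smoothNumbers, ← Nat.le_floor_iff (by linarith), Nat.one_le_iff_ne_zero]
  refine and_congr_right fun _ => ?_
  rw [Pplus_le_iff ((Nat.one_le_floor_iff y).mpr hy)]
  simp only [Nat.mem_primeFactors_iff_mem_primeFactorsList, Nat.lt_succ_iff]

lemma lambdaBigOmega_eq_tsum_indicator (x : ℝ) {y : ℝ} (hy : 1 ≤ y) (z : ℂ) :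
    lambdaBigOmega x y z = ∑' m, ((⌊y⌋₊ + 1).smoothNumbers ∩
      {m | Ω m ≤ 3 / 2 * log (log x)}).indicator (bigOmegaWeight z⁻¹) m := by
  refine tsum_congr fun m => ?_
  rw [Set.indicator_apply]
  refine if_congr ?_ ?_ rfl
  · rw [← and_assoc, one_le_and_Pplus_le_iff_mem_smoothNumbers hy]
    rfl
  · rw [bigOmegaWeight_apply, ArithmeticFunction.cardFactors_apply, zpow_neg, zpow_natCast,
      inv_pow]

lemma FbigOmegaC_eq_prod_primesBelow (y : ℝ) {w : ℂ} (hw : ‖w‖ < 2) :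
    FbigOmegaC y w = ∏ p ∈ (⌊y⌋₊ + 1).primesBelow, (1 - w / p) := by
  refine prod_congr rfl fun p hp => if_neg fun h => ?_
  have hp2 : (2 : ℝ) ≤ p := by exact_mod_cast (Nat.prime_of_mem_primesBelow hp).two_le
  rw [← h, Complex.norm_natCast] at hw
  linarith

lemma lambdaBigOmega_sub_inv_FbigOmegaC (x : ℝ) {y : ℝ} (hy : 1 ≤ y) {z : ℂ} (hz : ‖z‖ = 1) :
    lambdaBigOmega x y z - 1 / FbigOmegaC y (1 / z) = -∑' m, ((⌊y⌋₊ + 1).smoothNumbers \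
      {m | Ω m ≤ 3 / 2 * log (log x)}).indicator (bigOmegaWeight z⁻¹) m := by
  set S := (⌊y⌋₊ + 1).smoothNumbers
  set B := {m : ℕ | Ω m ≤ 3 / 2 * log (log x)}
  set f := bigOmegaWeight z⁻¹
  have hw : ‖z⁻¹‖ < 2 := by rw [norm_inv, hz]; norm_num
  obtain ⟨hnorm, hprod⟩ :=
    summable_and_hasSum_indicator_smoothNumbers_bigOmegaWeight hw (⌊y⌋₊ + 1)
  have hsummable : ∀ T ⊆ S, Summable (T.indicator f) := fun T hT =>
    hnorm.of_norm_bounded fun m => norm_indicator_le_of_subset hT _ m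
  have hsplit : S.indicator f = fun m => (S ∩ B).indicator f m + (S \ B).indicator f m := by
    rw [← Set.indicator_union_of_disjoint Set.disjoint_sdiff_inter.symm, Set.inter_union_sdiff]
  rw [lambdaBigOmega_eq_tsum_indicator x hy, one_div z, one_div,
    FbigOmegaC_eq_prod_primesBelow y hw, ← prod_inv_distrib, ← hprod.tsum_eq, hsplit,
    (hsummable _ Set.inter_subset_left).tsum_add (hsummable _ Set.sdiff_subset)]
  ring

lemma natLog_two_floor_add_one_le {y L : ℝ} (hy : 2 ≤ y) (hyL : y ≤ L) :
    (Nat.log 2 (⌊y⌋₊ + 1) : ℝ) ≤ 2 * log L + 1 := by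
  set K := Nat.log 2 (⌊y⌋₊ + 1)
  have hlog2 : 1 / 2 < log 2 := by linarith [log_two_gt_d9]
  have hpow : (2 : ℝ) ^ K ≤ 2 * L := by
    calc (2 : ℝ) ^ K ≤ (⌊y⌋₊ + 1 : ℕ) := mod_cast Nat.pow_log_le_self 2 (by omega)
      _ ≤ y + 1 := by push_cast; linarith [Nat.floor_le (by linarith : 0 ≤ y)]
      _ ≤ 2 * L := by linarith
  have hKlog : K * log 2 ≤ log 2 + log L := by
    rw [← log_pow, ← log_mul two_ne_zero (by linarith)]
    exact log_le_log (by positivity) hpow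
  have hL : 0 ≤ log L := log_nonneg (by linarith)
  nlinarith

lemma rankin_exponent_le {ξ k : ℝ} (hξ : 0 ≤ ξ) (hk0 : 0 < k) (hk : k ≤ 2 * ξ + 1) :
    -(3 / 2 * ξ) * log 1.99 + 1592 * (1 + log k) ≤ 1592 * log 1000000 + 1 - ξ := by
  have hlog199 : 0.688 ≤ log 1.99 := by
    have h := log_le_sub_one_of_pos (show (0 : ℝ) < 2 / 1.99 by norm_num)
    rw [log_div (by norm_num) (by norm_num)] at h
    linarith [log_two_gt_d9]
  have hlogk : log k ≤ k / 1000000 + log 1000000 - 1 := by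
    have h := log_le_sub_one_of_pos (show 0 < k / 1000000 by positivity)
    rw [log_div hk0.ne' (by norm_num)] at h
    linarith
  nlinarith

theorem lambdaBigOmega_estimate :
    ∃ C : ℝ, ∀ x ≥ (3 : ℝ), ∀ y : ℝ, 2 ≤ y → y ≤ Real.log x → ∀ z : ℂ, ‖z‖ = 1 →
      ‖lambdaBigOmega x y z - 1 / FbigOmegaC y (1 / z)‖ ≤ C / Real.log x := by
  refine ⟨exp (1592 * log 1000000 + 1), fun x hx y hy2 hyx z hz => ?_⟩
  have hlogx : 1 < log x := by
    rw [lt_log_iff_exp_lt (by linarith)]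
    linarith [exp_one_lt_d9]
  set ξ := log (log x)
  set N := ⌊y⌋₊ + 1
  have hK : 0 < Nat.log 2 N :=
    Nat.log_pos one_lt_two (Nat.succ_le_succ ((Nat.one_le_floor_iff y).mpr (by linarith)))
  rw [lambdaBigOmega_sub_inv_FbigOmegaC x (by linarith) hz, norm_neg]
  calc _ ≤ (1.99 : ℝ) ^ (-(3 / 2 * ξ)) * ∏ p ∈ N.primesBelow, (1 - 1.99 / (p : ℝ))⁻¹ :=
        norm_tsum_indicator_bigOmegaWeight_le (by rw [norm_inv, hz, inv_one]) (by norm_num)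
          (by norm_num) _ _
    _ ≤ exp (-(3 / 2 * ξ) * log 1.99) * exp (1592 * (1 + log (Nat.log 2 N))) := by
        rw [rpow_def_of_pos (by norm_num), mul_comm (log _)]
        gcongr
        refine (prod_primesBelow_inv_one_sub_div_le (by norm_num) (by norm_num) N).trans ?_
        rw [exp_le_exp]
        -- `2 * 1.99 / (2 - 1.99) = 398` and `398 * 4 = 1592`
        linarith [sum_inv_primesBelow_le N]
    _ ≤ exp (1592 * log 1000000 + 1 - ξ) := by
        rw [← exp_add, exp_le_exp]
        exact rankin_exponent_le (log_pos hlogx).le (mod_cast hK)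
          (natLog_two_floor_add_one_le hy2 hyx)
    _ = exp (1592 * log 1000000 + 1) / log x := by rw [exp_sub, exp_log (by linarith)]
end
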